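/- Let x ∈ A^ℤ be an aperiodic linearly recurrent sequence with constant K. Then the factor complexity of x satisfies p_x(n) ≤ K·n for all n ≥ 1. -/

import Mathlib

open List

/-- Extension of a substitution to words. -/
def applyW {A : Type*} (σ : A → List A) (w : List A) : List A := w.flatMap σ

/-- `σⁿ` as a map on letters. -/
def powL {A : Type*} (σ : A → List A) (n : ℕ) (a : A) : List A := (applyW σ)^[n] [a]

/-- `σⁿ` as a map on words. -/
def iterW {A : Type*} (σ : A → List A) (n : ℕ) (w : List A) : List A := (applyW σ)^[n] w

/-- A substitution is non-erasing if no letter maps to the empty word. -/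
def NonErasing {A : Type*} (σ : A → List A) : Prop := ∀ a, σ a ≠ []

/-- A substitution is primitive if some power maps any letter to a word containing
every letter. -/
def PrimitiveSub {A : Type*} (σ : A → List A) : Prop :=
  ∃ k : ℕ, ∀ b c : A, b ∈ powL σ k c

/-- `σ` is prolongable on `a` if `σ a = a u` with `u` nonempty. -/
def Prolongable {A : Type*} (σ : A → List A) (a : A) : Prop :=
  ∃ u : List A, u ≠ [] ∧ σ a = a :: u

/-- `|σⁿ|`, the maximal length of the image of a letter under `σⁿ`. -/
def maxLen {A : Type*} [Fintype A] (σ : A → List A) (n : ℕ) : ℕ :=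
  Finset.univ.sup fun a => (powL σ n a).length

/-- `⟨σⁿ⟩`, the minimal length of the image of a letter under `σⁿ`. -/
def minLen {A : Type*} [Fintype A] [Nonempty A] (σ : A → List A) (n : ℕ) : ℕ :=
  Finset.univ.inf' Finset.univ_nonempty fun a => (powL σ n a).length

/-- The factor `x_{[i,j)}` of a two-sided sequence. -/
def seg {A : Type*} (x : ℤ → A) (i j : ℤ) : List A :=
  (List.range (j - i).toNat).map fun t => x (i + t)

/-- `w` is a factor of the two-sided sequence `x`. -/
def FactorOf {A : Type*} (x : ℤ → A) (w : List A) : Prop :=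
  ∃ i : ℤ, w = seg x i (i + w.length)

/-- The language of a substitution: words occurring in some `σⁿ(c)`. -/
def LangOf {A : Type*} (σ : A → List A) (w : List A) : Prop :=
  ∃ n : ℕ, ∃ c : A, w <:+: powL σ n c

/-- The map `f^{(1)}` associated with the substitution `τ` and the sequence `x`;
the map `f^{(p)}` of `σ` is obtained as `F (powL σ p) x`. -/
def F {A : Type*} (τ : A → List A) (x : ℤ → A) (i : ℤ) : ℤ :=
  if 0 ≤ i then (((seg x 0 i).flatMap τ).length : ℤ)
  else -(((seg x i 0).flatMap τ).length : ℤ)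

/-- `x` is a (two-sided) fixed point of `τ`:  `τ (x i)` is the block of `x`
between `f^{(1)}(i)` and `f^{(1)}(i+1)`. -/
def IsFixedPoint {A : Type*} (τ : A → List A) (x : ℤ → A) : Prop :=
  ∀ i : ℤ, seg x (F τ x i) (F τ x (i + 1)) = τ (x i)

/-- `x` is an admissible fixed point of `τ`: it is a fixed point and the word
`x₋₁x₀` occurs in some `τⁿ(c)`. -/
def Admissible {A : Type*} (τ : A → List A) (x : ℤ → A) : Prop :=
  IsFixedPoint τ x ∧ ∃ n : ℕ, ∃ c : A, [x (-1), x 0] <:+: powL τ n c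

/-- `τ` is recognizable on `x` with constant `L`. -/
def RecogWith {A : Type*} (τ : A → List A) (x : ℤ → A) (L : ℤ) : Prop :=
  0 < L ∧ ∀ i m : ℤ,
    seg x (m - L) (m + L + 1) = seg x (F τ x i - L) (F τ x i + L + 1) →
    ∃ j : ℤ, m = F τ x j ∧ x i = x j

/-- `x` is `k`-power-free: no nonempty word `w` has `w^k` as a factor of `x`. -/
def PowerFree {A : Type*} (x : ℤ → A) (k : ℕ) : Prop :=
  ∀ w : List A, w ≠ [] → ¬ FactorOf x (List.replicate k w).flatten

/-- `x` is recurrent: every factor occurs infinitely many times. -/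
def Recurrent {A : Type*} (x : ℤ → A) : Prop :=
  ∀ w : List A, FactorOf x w → ∀ N : ℤ, ∃ i : ℤ, N ≤ i ∧ w = seg x i (i + w.length)

/-- Number of occurrences of `u` in `w`. -/
def occCount {A : Type*} [DecidableEq A] (u w : List A) : ℕ :=
  (List.range (w.length + 1)).countP fun i => decide (u <+: w.drop i)

/-- `r` is a return word to `u` in `x`. -/
def ReturnWordOf {A : Type*} [DecidableEq A] (x : ℤ → A) (u r : List A) : Prop :=
  FactorOf x (r ++ u) ∧ u <+: (r ++ u) ∧ occCount u (r ++ u) = 2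

/-- `r` is a return word to `u` in the language of `σ`. -/
def ReturnWordLang {A : Type*} [DecidableEq A] (σ : A → List A) (u r : List A) : Prop :=
  LangOf σ (r ++ u) ∧ u <+: (r ++ u) ∧ occCount u (r ++ u) = 2

/-- `x` is linearly recurrent with constant `K`. -/
def LinRec {A : Type*} [DecidableEq A] (x : ℤ → A) (K : ℕ) : Prop :=
  Recurrent x ∧ ∀ u r : List A, FactorOf x u → ReturnWordOf x u r → r.length ≤ K * u.length

/-- `x` is aperiodic (not periodic). -/
def AperiodicSeq {A : Type*} (x : ℤ → A) : Prop :=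
  ¬ ∃ p : ℤ, 0 < p ∧ ∀ i : ℤ, x (i + p) = x i

/-- Factor complexity of `x`. -/
noncomputable def complexity {A : Type*} (x : ℤ → A) (n : ℕ) : ℕ :=
  Set.ncard {w : List A | FactorOf x w ∧ w.length = n}

/-!
Between two consecutive occurrences of a factor `u` one reads a return word to `u`, so consecutive
occurrences are at most `K |u|` apart. Hence every window of `K |u|` consecutive positions lying
to the right of some occurrence of `u` contains an occurrence of `u`. A single window of length
`K n` to the right of an occurrence of each of the finitely many factors of length `n` then reads
every one of them.
-/

section Segments

variable {A : Type*} (x : ℤ → A)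

theorem seg_eq_map (i j : ℤ) : seg x i j = (range (j - i).toNat).map fun t : ℕ => x (i + t) := by
  simp [seg, ← map_eq_flatMap]

@[simp]
theorem length_seg (i j : ℤ) : (seg x i j).length = (j - i).toNat := by
  simp [seg_eq_map]

theorem seg_append_seg {i j k : ℤ} (hij : i ≤ j) (hjk : j ≤ k) :
    seg x i j ++ seg x j k = seg x i k := by
  simp only [seg_eq_map]
  rw [show (k - i).toNat = (j - i).toNat + (k - j).toNat by omega, range_add, map_append, map_map]
  congr 1
  refine map_congr_left fun t _ => ?_
  simp only [Function.comp_apply]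
  congr 1
  omega

theorem drop_seg {i j : ℤ} (m : ℕ) (hm : i + m ≤ j) : (seg x i j).drop m = seg x (i + m) j := by
  rw [← seg_append_seg x (by omega : i ≤ i + m) hm, drop_left' (by simp)]

theorem take_seg {i j : ℤ} (m : ℕ) (hm : i + m ≤ j) : (seg x i j).take m = seg x i (i + m) := by
  rw [← seg_append_seg x (by omega : i ≤ i + m) hm, take_left' (by simp)]

end Segments

section Occurrences

variable {A : Type*} (x : ℤ → A)

def OccursAt (u : List A) (p : ℤ) : Prop :=
  u = seg x p (p + u.length)

theorem prefix_drop_seg_iff {u : List A} (hu : u ≠ []) {p q : ℤ} (hpq : p ≤ q) (i : ℕ) :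
    u <+: (seg x p (q + u.length)).drop i ↔ (i : ℤ) ≤ q - p ∧ OccursAt x u (p + i) := by
  by_cases hi : (i : ℤ) ≤ q - p
  · rw [drop_seg x i (by omega), prefix_iff_eq_take, take_seg x _ (by omega)]
    simp [OccursAt, hi]
  · refine iff_of_false (fun h => ?_) (fun h => hi h.1)
    have := h.length_le
    simp only [length_drop, length_seg] at this
    have := length_pos_iff.2 hu
    omega

theorem countP_range_eq_or_eq {N d : ℕ} (hd : 0 < d) (hdN : d < N) :
    (range N).countP (fun i => i = 0 ∨ i = d) = 2 := by
  rw [countP_eq_length_filter, ← toFinset_card_of_nodup (nodup_range.filter _)]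
  rw [show ((range N).filter fun i => i = 0 ∨ i = d).toFinset = {0, d} by ext; simp; omega]
  exact Finset.card_pair hd.ne

variable {x} in
theorem Recurrent.exists_next_occursAt (hrec : Recurrent x) {u : List A} {p : ℤ}
    (hp : OccursAt x u p) :
    ∃ q, p < q ∧ OccursAt x u q ∧ ∀ m, p < m → m < q → ¬ OccursAt x u m := by
  classical
  have hex : ∃ k : ℕ, OccursAt x u (p + 1 + k) := by
    obtain ⟨i, hi, hocc⟩ := hrec u ⟨p, hp⟩ (p + 1)
    exact ⟨(i - (p + 1)).toNat, by rwa [show p + 1 + ((i - (p + 1)).toNat : ℤ) = i by omega]⟩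
  refine ⟨p + 1 + Nat.find hex, by omega, Nat.find_spec hex, fun m hpm hmq hm => ?_⟩
  refine Nat.find_min hex (m := (m - (p + 1)).toNat) (by omega) ?_
  rwa [show p + 1 + ((m - (p + 1)).toNat : ℤ) = m by omega]

variable [DecidableEq A]

theorem occCount_seg_of_consecutive {u : List A} (hu : u ≠ []) {p q : ℤ} (hpq : p < q)
    (hp : OccursAt x u p) (hq : OccursAt x u q)
    (hbetween : ∀ m, p < m → m < q → ¬ OccursAt x u m) :
    occCount u (seg x p (q + u.length)) = 2 := by
  obtain ⟨d, rfl⟩ : ∃ d : ℕ, q = p + d := ⟨(q - p).toNat, by omega⟩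
  unfold occCount
  rw [countP_congr (q := fun i => i = 0 ∨ i = d)]
  · exact countP_range_eq_or_eq (by omega) (by simp; omega)
  intro i _
  simp only [decide_eq_true_eq]
  rw [prefix_drop_seg_iff x hu hpq.le]
  constructor
  · rintro ⟨hid, hocc⟩
    by_contra! hne
    exact hbetween (p + i) (by omega) (by omega) hocc
  · rintro (rfl | rfl)
    · simpa using hp
    · exact ⟨by omega, hq⟩

theorem returnWordOf_seg_of_consecutive {u : List A} (hu : u ≠ []) {p q : ℤ} (hpq : p < q)
    (hp : OccursAt x u p) (hq : OccursAt x u q)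
    (hbetween : ∀ m, p < m → m < q → ¬ OccursAt x u m) :
    ReturnWordOf x u (seg x p q) := by
  have hsplit : seg x p q ++ u = seg x p (q + u.length) := by
    conv_lhs => rw [hq]
    exact seg_append_seg x hpq.le (by omega)
  refine ⟨⟨p, ?_⟩, ?_, ?_⟩
  · rw [hsplit, length_seg]
    congr 1
    omega
  · rw [hsplit, ← seg_append_seg x (by omega : p ≤ p + u.length) (by omega), ← hp]
    exact prefix_append _ _
  · rw [hsplit]
    exact occCount_seg_of_consecutive x hu hpq hp hq hbetween

end Occurrences

section LinearRecurrence

variable {A : Type*} [DecidableEq A] (x : ℤ → A)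

def LinearlyBoundedReturns (K : ℕ) : Prop :=
  ∀ u r : List A, u ≠ [] → FactorOf x u → ReturnWordOf x u r → r.length ≤ K * u.length

theorem LinRec.linearlyBoundedReturns {K : ℕ} (hlr : LinRec x K) :
    LinearlyBoundedReturns x K :=
  fun u r _ => hlr.2 u r

variable {x}

theorem LinearlyBoundedReturns.sub_le_of_consecutive {K : ℕ} (hK : LinearlyBoundedReturns x K)
    {u : List A} (hu : u ≠ []) {p q : ℤ} (hpq : p < q) (hp : OccursAt x u p)
    (hq : OccursAt x u q) (hbetween : ∀ m, p < m → m < q → ¬ OccursAt x u m) :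
    q - p ≤ K * u.length := by
  have := hK u _ hu ⟨p, hp⟩ (returnWordOf_seg_of_consecutive x hu hpq hp hq hbetween)
  rw [length_seg] at this
  omega

theorem exists_occursAt_mem_Ioc {K : ℕ} (hrec : Recurrent x) (hK : LinearlyBoundedReturns x K)
    {u : List A} (hu : u ≠ []) {p i : ℤ} (hp : OccursAt x u p) (hpi : p ≤ i) :
    ∃ q ∈ Set.Ioc i (i + K * u.length), OccursAt x u q := by
  induction hN : (i - p).toNat using Nat.strong_induction_on generalizing p with
  | _ N ih =>
  obtain ⟨q, hpq, hq, hbetween⟩ := hrec.exists_next_occursAt hp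
  have hgap := hK.sub_le_of_consecutive hu hpq hp hq hbetween
  by_cases hiq : i < q
  · exact ⟨q, ⟨hiq, by omega⟩, hq⟩
  · exact ih _ (by omega) hq (by omega) rfl

theorem complexity_le_of_linearlyBoundedReturns {K : ℕ} (hrec : Recurrent x)
    (hK : LinearlyBoundedReturns x K) {n : ℕ} (hn : n ≠ 0) : complexity x n ≤ K * n := by
  unfold complexity
  set S := {w : List A | FactorOf x w ∧ w.length = n}
  rcases S.finite_or_infinite with hfin | hinf
  swap
  · simp [hinf.ncard]
  choose! f hf using fun w (hw : w ∈ S) => hw.1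
  obtain ⟨i, hi⟩ := (hfin.image f).bddAbove
  have hsub : S ⊆ (Finset.range (K * n)).image fun j : ℕ => seg x (i + 1 + j) (i + 1 + j + n) := by
    rintro w hw
    obtain ⟨q, ⟨hiq, hqi⟩, hq⟩ :=
      exists_occursAt_mem_Ioc hrec hK (ne_nil_of_length_pos (hw.2 ▸ Nat.pos_of_ne_zero hn))
        (hf w hw) (hi ⟨w, hw, rfl⟩)
    rw [OccursAt, hw.2] at hq
    rw [hw.2] at hqi
    refine Finset.mem_coe.2 <|
      Finset.mem_image.2 ⟨(q - (i + 1)).toNat, Finset.mem_range.2 (by omega), ?_⟩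
    rw [hq, show i + 1 + ((q - (i + 1)).toNat : ℤ) = q by omega]
  calc S.ncard ≤ _ := Set.ncard_le_ncard hsub (Finset.finite_toSet _)
    _ = _ := Set.ncard_coe_finset _
    _ ≤ _ := Finset.card_image_le
    _ = K * n := Finset.card_range _

end LinearRecurrence

theorem stmt8_general {A : Type*} [DecidableEq A] (x : ℤ → A) (K : ℕ)
    (hlr : LinRec x K) :
    ∀ n : ℕ, 1 ≤ n → complexity x n ≤ K * n :=
  fun _ hn => complexity_le_of_linearlyBoundedReturns hlr.1 (hlr.linearlyBoundedReturns x) (by omega)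

theorem stmt8 {A : Type*} [DecidableEq A] (x : ℤ → A) (K : ℕ)
    (hap : AperiodicSeq x) (hlr : LinRec x K) :
    ∀ n : ℕ, 1 ≤ n → complexity x n ≤ K * n :=
  stmt8_general x K hlr
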